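/- arXiv:2206.09642 — 8 statements merged into one kernel-verified Lean document; each statement's English description precedes it below -/
import Mathlib

section
/- Fix M > 0. Let μ and ν be Borel probability measures on [0,M], and let x₁, x₂ be prices with 0 ≤ x₁ < x₂ ≤ M. Then R(x₂,ν) − R(x₁,μ) ≤ (x₂ − x₁) + M·d_W(μ,ν)/(x₂ − x₁). -/
/-!
Write `a = ν[x₂, ∞)` and `b = μ[x₁, ∞)`, so that
`R(x₂,ν) - R(x₁,μ) = (x₂ - x₁)·a + x₁·(a - b)` and the first term is at most `x₂ - x₁`.
For every `t ∈ [x₁, x₂)` one has `a ≤ 1 - H(t)` and `1 - F(t) ≤ b` (as `μ` lives on `[0, ∞)`),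
so `a - b ≤ F(t) - H(t)`; integrating over `[x₁, x₂) ⊆ [0, M]` gives
`(x₂ - x₁)·(a - b) ≤ d_W(μ,ν)`, and `x₁ ≤ M` bounds the second term.
-/

open MeasureTheory

noncomputable section

/-- Cumulative distribution function `F(t) = μ([0,t])`. -/
def cdf0 (μ : Measure ℝ) (t : ℝ) : ℝ := (μ (Set.Icc 0 t)).toReal

/-- Wasserstein-1 distance between measures on `[0,M]`: `∫₀^M |F(t) - H(t)| dt`. -/
def wassDist (M : ℝ) (μ ν : Measure ℝ) : ℝ :=
  ∫ t in Set.Icc (0:ℝ) M, |cdf0 μ t - cdf0 ν t|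

/-- Expected pricing revenue `R(x,μ) = x · μ{ξ : ξ ≥ x}`. -/
def rev (x : ℝ) (μ : Measure ℝ) : ℝ := x * (μ {ξ : ℝ | x ≤ ξ}).toReal

open Set

lemma cdf0_eq_measureReal (μ : Measure ℝ) (t : ℝ) : cdf0 μ t = μ.real (Icc 0 t) := rfl

lemma cdf0_mono (μ : Measure ℝ) [IsFiniteMeasure μ] : Monotone (cdf0 μ) :=
  fun _ _ hst => measureReal_mono (Icc_subset_Icc_right hst)

lemma abs_cdf0_sub_cdf0_le_one (μ ν : Measure ℝ) [IsProbabilityMeasure μ]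
    [IsProbabilityMeasure ν] (t : ℝ) : |cdf0 μ t - cdf0 ν t| ≤ 1 :=
  abs_sub_le_of_nonneg_of_le measureReal_nonneg measureReal_le_one
    measureReal_nonneg measureReal_le_one

lemma integrableOn_abs_cdf0_sub_cdf0 (μ ν : Measure ℝ) [IsProbabilityMeasure μ]
    [IsProbabilityMeasure ν] {s : Set ℝ} (hs : volume s ≠ ⊤) :
    IntegrableOn (fun t => |cdf0 μ t - cdf0 ν t|) s :=
  Measure.integrableOn_of_bounded hs
    ((cdf0_mono μ).measurable.sub (cdf0_mono ν).measurable).abs.aestronglyMeasurable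
    (Filter.Eventually.of_forall fun t => by
      simpa only [Real.norm_eq_abs, abs_abs] using abs_cdf0_sub_cdf0_le_one μ ν t)

lemma wassDist_nonneg (M : ℝ) (μ ν : Measure ℝ) : 0 ≤ wassDist M μ ν :=
  integral_nonneg fun _ => abs_nonneg _

lemma measureReal_Ici_add_cdf0_le_one (ν : Measure ℝ) [IsProbabilityMeasure ν] {t x : ℝ}
    (htx : t < x) : ν.real (Ici x) + cdf0 ν t ≤ 1 := by
  have hdisj : Disjoint (Icc 0 t) (Ici x) :=
    disjoint_left.mpr fun ξ hξ hξx => (hξ.2.trans_lt htx).not_ge hξx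
  rw [add_comm, cdf0_eq_measureReal, ← measureReal_union hdisj measurableSet_Ici]
  exact measureReal_le_one

lemma one_le_cdf0_add_measureReal_Ici (μ : Measure ℝ) [IsFiniteMeasure μ]
    (hμ : μ (Ici 0) = 1) {x t : ℝ} (hxt : x ≤ t) : 1 ≤ cdf0 μ t + μ.real (Ici x) := by
  have hcover : Ici 0 ⊆ Icc 0 t ∪ Ici x := fun ξ hξ =>
    (le_or_gt ξ t).imp (fun h => ⟨hξ, h⟩) fun h => hxt.trans h.le
  calc (1 : ℝ) = μ.real (Ici 0) := by rw [measureReal_def, hμ, ENNReal.toReal_one]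
    _ ≤ μ.real (Icc 0 t ∪ Ici x) := measureReal_mono hcover
    _ ≤ cdf0 μ t + μ.real (Ici x) := measureReal_union_le _ _

lemma measureReal_Ici_sub_measureReal_Ici_le_cdf0_sub (μ ν : Measure ℝ)
    [IsProbabilityMeasure μ] [IsProbabilityMeasure ν] (hμ : μ (Ici 0) = 1)
    {x₁ x₂ t : ℝ} (ht : t ∈ Ico x₁ x₂) :
    ν.real (Ici x₂) - μ.real (Ici x₁) ≤ cdf0 μ t - cdf0 ν t := by
  linarith [measureReal_Ici_add_cdf0_le_one ν ht.2, one_le_cdf0_add_measureReal_Ici μ hμ ht.1]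

lemma mul_measureReal_Ici_sub_measureReal_Ici_le_wassDist (M : ℝ) (μ ν : Measure ℝ)
    [IsProbabilityMeasure μ] [IsProbabilityMeasure ν] (hμ : μ (Ici 0) = 1)
    {x₁ x₂ : ℝ} (hx₁ : 0 ≤ x₁) (h12 : x₁ ≤ x₂) (hx₂ : x₂ ≤ M) :
    (x₂ - x₁) * (ν.real (Ici x₂) - μ.real (Ici x₁)) ≤ wassDist M μ ν := by
  have hsub : Ico x₁ x₂ ⊆ Icc 0 M := fun t ht => ⟨hx₁.trans ht.1, ht.2.le.trans hx₂⟩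
  calc (x₂ - x₁) * (ν.real (Ici x₂) - μ.real (Ici x₁))
      = (ν.real (Ici x₂) - μ.real (Ici x₁)) * volume.real (Ico x₁ x₂) := by
        rw [Real.volume_real_Ico_of_le h12, mul_comm]
    _ ≤ ∫ t in Ico x₁ x₂, |cdf0 μ t - cdf0 ν t| :=
        setIntegral_ge_of_const_le_real measurableSet_Ico measure_Ico_lt_top.ne
          (fun t ht => (measureReal_Ici_sub_measureReal_Ici_le_cdf0_sub μ ν hμ ht).trans
            (le_abs_self _))
          (integrableOn_abs_cdf0_sub_cdf0 μ ν measure_Ico_lt_top.ne)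
    _ ≤ wassDist M μ ν :=
        setIntegral_mono_set (integrableOn_abs_cdf0_sub_cdf0 μ ν measure_Icc_lt_top.ne)
          (Filter.Eventually.of_forall fun _ => abs_nonneg _) hsub.eventuallyLE

theorem pricing_revenue_difference_general
    (M : ℝ)
    (μ ν : Measure ℝ) [IsProbabilityMeasure μ] [IsProbabilityMeasure ν]
    (hμ : μ (Set.Icc 0 M) = 1)
    (x₁ x₂ : ℝ) (hx₁ : 0 ≤ x₁) (h12 : x₁ < x₂) (hx₂ : x₂ ≤ M) :
    rev x₂ ν - rev x₁ μ ≤ (x₂ - x₁) + M * wassDist M μ ν / (x₂ - x₁) := by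
  have hμ₀ : μ (Ici 0) = 1 :=
    le_antisymm prob_le_one (hμ ▸ measure_mono Icc_subset_Ici_self)
  set a := ν.real (Ici x₂)
  set b := μ.real (Ici x₁)
  have hrev : rev x₂ ν - rev x₁ μ = (x₂ - x₁) * a + x₁ * (a - b) := by
    simp only [rev, a, b, measureReal_def, Ici_def]; ring
  have hW : (x₂ - x₁) * (a - b) ≤ wassDist M μ ν :=
    mul_measureReal_Ici_sub_measureReal_Ici_le_wassDist M μ ν hμ₀ hx₁ h12.le hx₂
  have hd : 0 < x₂ - x₁ := sub_pos.mpr h12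
  have ha : a ≤ 1 := measureReal_le_one
  have hsecond : x₁ * (a - b) ≤ M * wassDist M μ ν / (x₂ - x₁) := by
    rw [le_div_iff₀ hd]
    rcases le_or_gt (a - b) 0 with hab | hab
    · nlinarith [wassDist_nonneg M μ ν]
    · calc x₁ * (a - b) * (x₂ - x₁) ≤ M * ((x₂ - x₁) * (a - b)) := by
            nlinarith [mul_pos hab hd]
        _ ≤ M * wassDist M μ ν := by gcongr; linarith
  have hfirst : (x₂ - x₁) * a ≤ x₂ - x₁ := mul_le_of_le_one_right hd.le ha
  rw [hrev]
  linarith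

/-- Proposition 4 (pricing): for prices `x₁ < x₂`,
`R(x₂,ν) - R(x₁,μ) ≤ (x₂ - x₁) + M·d_W(μ,ν)/(x₂ - x₁)`. -/
theorem pricing_revenue_difference
    (M : ℝ) (hM : 0 < M)
    (μ ν : Measure ℝ) [IsProbabilityMeasure μ] [IsProbabilityMeasure ν]
    (hμ : μ (Set.Icc 0 M) = 1) (hν : ν (Set.Icc 0 M) = 1)
    (x₁ x₂ : ℝ) (hx₁ : 0 ≤ x₁) (h12 : x₁ < x₂) (hx₂ : x₂ ≤ M) :
    rev x₂ ν - rev x₁ μ ≤ (x₂ - x₁) + M * wassDist M μ ν / (x₂ - x₁) :=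
  pricing_revenue_difference_general M μ ν hμ x₁ x₂ hx₁ h12 hx₂

end
end

section
/- Fix M > 0 and ε > 0. Let μ and ν be Borel probability measures on [0,M] with d_W(μ,ν) ≤ ε, and let x_ν ∈ [0,M] satisfy R(x_ν,ν) = opt(ν). For δ < 0 set p_δ = max(x_ν + δ, 0). Then opt(μ) − R(p_δ,μ) ≤ 2√(M·ε) + |δ| + M·ε/|δ|. In particular, taking δ = −√(M·ε), the deflated price p = max(x_ν − √(M·ε), 0) satisfies opt(μ) − R(p,μ) ≤ 4·√(M·ε). -/
/-!
Averaging `|F_μ - F_ν|` over `[x - θ, x)` yields a point `t` where the two distribution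
functions differ by at most `ε / θ`. Since `μ{ξ ≥ x} ≤ 1 - F_μ(t)` and
`1 - F_ν(t) ≤ ν{ξ ≥ x - θ}`, lowering a price by `θ` while passing from `μ` to `ν` loses at
most `θ + Mε/θ` revenue. From `μ` to `ν` with `θ = √(Mε)` this gives
`opt μ ≤ opt ν + 2√(Mε)`; from `ν` to `μ` at the price `x_ν` with `θ = |δ|` it gives
`opt ν ≤ R(p_δ, μ) + |δ| + Mε/|δ|`.
-/

open MeasureTheory

noncomputable section

/-- Optimal revenue `opt(μ) = sup_{x ∈ [0,M]} R(x,μ)`. -/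
def optRev (M : ℝ) (μ : Measure ℝ) : ℝ := ⨆ x : Set.Icc (0:ℝ) M, rev x.1 μ

open Set

lemma wassDist_comm (M : ℝ) (μ ν : Measure ℝ) : wassDist M μ ν = wassDist M ν μ := by
  simp only [wassDist, abs_sub_comm]

lemma rev_le_self {x : ℝ} (μ : Measure ℝ) [IsProbabilityMeasure μ] (hx : 0 ≤ x) :
    rev x μ ≤ x :=
  mul_le_of_le_one_right hx measureReal_le_one

lemma measureReal_Ici_le_one_sub_cdf0 {t x : ℝ} (μ : Measure ℝ) [IsProbabilityMeasure μ]
    (htx : t < x) : μ.real (Ici x) ≤ 1 - cdf0 μ t := by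
  have hdisj : Disjoint (Icc 0 t) (Ici x) :=
    disjoint_left.2 fun _ hξt hξx => (hξt.2.trans_lt htx).not_ge hξx
  show _ ≤ 1 - μ.real (Icc 0 t)
  linarith [measureReal_union (μ := μ) hdisj measurableSet_Ici,
    measureReal_le_one (μ := μ) (s := Icc 0 t ∪ Ici x)]

lemma one_sub_cdf0_le_measureReal_Ici {M t x : ℝ} (μ : Measure ℝ) [IsFiniteMeasure μ]
    (hμ : μ (Icc 0 M) = 1) (hxt : x ≤ t) : 1 - cdf0 μ t ≤ μ.real (Ici x) := by
  have hcover : Icc 0 M ⊆ Icc 0 t ∪ Ici x := fun ξ hξ =>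
    (le_or_gt ξ t).imp (fun hξt => ⟨hξ.1, hξt⟩) fun hξt => hxt.trans hξt.le
  have hμ' : μ.real (Icc 0 M) = 1 := by simp [measureReal_def, hμ]
  show 1 - μ.real (Icc 0 t) ≤ _
  linarith [measureReal_mono (μ := μ) hcover, measureReal_union_le (μ := μ) (Icc 0 t) (Ici x)]

lemma exists_abs_cdf0_sub_le {M ε a b : ℝ} (μ ν : Measure ℝ) [IsFiniteMeasure μ]
    [IsFiniteMeasure ν] (hW : wassDist M μ ν ≤ ε) (ha : 0 ≤ a) (hab : a < b) (hbM : b ≤ M) :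
    ∃ t ∈ Ico a b, |cdf0 μ t - cdf0 ν t| ≤ ε / (b - a) := by
  have hsub : Ico a b ⊆ Icc 0 M := fun t ht => ⟨ha.trans ht.1, ht.2.le.trans hbM⟩
  have hint : IntegrableOn (fun t => |cdf0 μ t - cdf0 ν t|) (Icc 0 M) :=
    ((((cdf0_mono μ).monotoneOn _).integrableOn_isCompact isCompact_Icc).sub
      (((cdf0_mono ν).monotoneOn _).integrableOn_isCompact isCompact_Icc)).abs
  obtain ⟨t, ht, hle⟩ := exists_le_setAverage (μ := volume) (s := Ico a b)
    (by simp [hab]) (by simp) (hint.mono_set hsub)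
  refine ⟨t, ht, hle.trans ?_⟩
  rw [setAverage_eq, smul_eq_mul, Real.volume_real_Ico_of_le hab.le, inv_mul_eq_div]
  refine div_le_div_of_nonneg_right ?_ (sub_nonneg.2 hab.le)
  exact (setIntegral_mono_set hint (ae_of_all _ fun _ => abs_nonneg _) hsub.eventuallyLE).trans hW

lemma rev_le_rev_sub_add {M ε θ x : ℝ} (μ ν : Measure ℝ) [IsProbabilityMeasure μ]
    [IsProbabilityMeasure ν] (hν : ν (Icc 0 M) = 1) (hε : 0 ≤ ε) (hW : wassDist M μ ν ≤ ε)
    (hθ : 0 < θ) (hx : x ∈ Icc 0 M) :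
    rev x μ ≤ rev (max (x - θ) 0) ν + θ + M * ε / θ := by
  obtain ⟨hx0, hxM⟩ := hx
  rcases le_or_gt x θ with hxθ | hθx
  · have : 0 ≤ M * ε / θ := by have := hx0.trans hxM; positivity
    have : 0 ≤ rev (max (x - θ) 0) ν := mul_nonneg (le_max_right _ _) measureReal_nonneg
    linarith [rev_le_self μ hx0]
  obtain ⟨t, ⟨hat, htx⟩, ht⟩ :=
    exists_abs_cdf0_sub_le μ ν hW (sub_pos.2 hθx).le (sub_lt_self x hθ) hxM
  rw [sub_sub_cancel] at ht
  have htail : μ.real (Ici x) ≤ ν.real (Ici (x - θ)) + ε / θ := by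
    linarith [one_sub_cdf0_le_measureReal_Ici ν hν hat, measureReal_Ici_le_one_sub_cdf0 μ htx,
      neg_abs_le (cdf0 μ t - cdf0 ν t)]
  rw [max_eq_left (sub_pos.2 hθx).le]
  calc rev x μ = x * μ.real (Ici x) := rfl
    _ ≤ x * (ν.real (Ici (x - θ)) + ε / θ) := by gcongr
    _ = (x - θ) * ν.real (Ici (x - θ)) + θ * ν.real (Ici (x - θ)) + x * (ε / θ) := by ring
    _ ≤ (x - θ) * ν.real (Ici (x - θ)) + θ + M * ε / θ := by
      rw [mul_div_assoc]
      gcongr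
      exact mul_le_of_le_one_right hθ.le measureReal_le_one

lemma rev_le_optRev {M x : ℝ} (μ : Measure ℝ) [IsProbabilityMeasure μ] (hx : x ∈ Icc 0 M) :
    rev x μ ≤ optRev M μ :=
  le_ciSup (f := fun y : Icc 0 M => rev y.1 μ)
    ⟨M, by rintro _ ⟨y, rfl⟩; exact (rev_le_self μ y.2.1).trans y.2.2⟩ ⟨x, hx⟩

lemma optRev_le {M c : ℝ} (μ : Measure ℝ) (hM : 0 ≤ M) (h : ∀ x ∈ Icc 0 M, rev x μ ≤ c) :
    optRev M μ ≤ c :=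
  have : Nonempty (Icc 0 M) := ⟨⟨0, left_mem_Icc.2 hM⟩⟩
  ciSup_le fun x => h x.1 x.2

lemma optRev_le_optRev_add {M ε θ : ℝ} (μ ν : Measure ℝ) [IsProbabilityMeasure μ]
    [IsProbabilityMeasure ν] (hM : 0 ≤ M) (hν : ν (Icc 0 M) = 1) (hε : 0 ≤ ε)
    (hW : wassDist M μ ν ≤ ε) (hθ : 0 < θ) :
    optRev M μ ≤ optRev M ν + θ + M * ε / θ :=
  optRev_le μ hM fun x hx => (rev_le_rev_sub_add μ ν hν hε hW hθ hx).trans <| by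
    gcongr
    exact rev_le_optRev ν ⟨le_max_right _ _, max_le (by linarith [hx.2]) hM⟩

/-- Regret of the deflated (`δ`-SAA) pricing policy under Wasserstein heterogeneity of
radius `ε`; with `δ = -√(Mε)` the regret is at most `4√(Mε)`. -/
theorem pricing_deflated_SAA_regret
    (M ε : ℝ) (hM : 0 < M) (hε : 0 < ε)
    (μ ν : Measure ℝ) [IsProbabilityMeasure μ] [IsProbabilityMeasure ν]
    (hμ : μ (Set.Icc 0 M) = 1) (hν : ν (Set.Icc 0 M) = 1)
    (hW : wassDist M μ ν ≤ ε)
    (xν : ℝ) (hxν_mem : xν ∈ Set.Icc (0:ℝ) M) (hxν : rev xν ν = optRev M ν) :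
    (∀ δ : ℝ, δ < 0 →
      optRev M μ - rev (max (xν + δ) 0) μ ≤
        2 * Real.sqrt (M * ε) + |δ| + M * ε / |δ|)
    ∧
    optRev M μ - rev (max (xν - Real.sqrt (M * ε)) 0) μ ≤ 4 * Real.sqrt (M * ε) := by
  set s := √(M * ε)
  have hs : 0 < s := Real.sqrt_pos.2 (mul_pos hM hε)
  have hMεs : M * ε / s = s := Real.div_sqrt
  have hopt : optRev M μ ≤ rev xν ν + 2 * s := by
    have := optRev_le_optRev_add μ ν hM.le hν hε.le hW hs
    rw [hMεs, ← hxν] at this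
    linarith
  have hregret : ∀ δ : ℝ, δ < 0 →
      optRev M μ - rev (max (xν + δ) 0) μ ≤ 2 * s + |δ| + M * ε / |δ| := by
    intro δ hδ
    have := rev_le_rev_sub_add ν μ hμ hε.le (wassDist_comm M μ ν ▸ hW) (neg_pos.2 hδ) hxν_mem
    rw [sub_neg_eq_add] at this
    rw [abs_of_neg hδ]
    linarith
  refine ⟨hregret, ?_⟩
  have := hregret (-s) (neg_neg_of_pos hs)
  rw [abs_neg, abs_of_pos hs, hMεs, ← sub_eq_add_neg] at this
  linarith

end
end

section
/- Fix M > 0 and ε > 0. For every η ∈ (0,M), let μ = δ_{M−η} and ν = δ_{min(M, M−η+ε)} be point-mass probability measures on [0,M]. Then: (i) d_W(μ,ν) ≤ ε; (ii) the price x* = min(M, M−η+ε) is the unique maximizer of x ↦ R(x,ν) over [0,M]; (iii) R(x*,μ) = 0 while opt(μ) = M − η. Consequently, the supremum over pairs (μ,ν) of probability measures on [0,M] with d_W(μ,ν) ≤ ε of opt(μ) − R(x_ν,μ), where x_ν maximizes R(·,ν), equals M. -/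
open MeasureTheory

noncomputable section

lemma rev_dirac (x c : ℝ) : rev x (Measure.dirac c) = if x ≤ c then x else 0 := by
  have h : {ξ : ℝ | x ≤ ξ} = Set.Ici x := rfl
  unfold rev
  rw [h, Measure.dirac_apply' _ measurableSet_Ici]
  by_cases hxc : x ≤ c <;> simp [Set.indicator, hxc, Set.mem_Ici]

lemma cdf0_dirac (c t : ℝ) (hc : 0 ≤ c) :
    cdf0 (Measure.dirac c) t = if c ≤ t then 1 else 0 := by
  unfold cdf0
  rw [Measure.dirac_apply' _ measurableSet_Icc]
  by_cases h : c ≤ t <;> simp [Set.indicator, Set.mem_Icc, hc, h]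

lemma optRev_dirac (M a : ℝ) (h0 : 0 ≤ a) (hM : a ≤ M) :
    optRev M (Measure.dirac a) = a := by
  have hne : Nonempty (Set.Icc (0:ℝ) M) := ⟨⟨a, h0, hM⟩⟩
  unfold optRev
  apply le_antisymm
  · apply ciSup_le
    intro x
    rw [rev_dirac]
    split
    · exact ‹x.1 ≤ a›
    · exact h0
  · have hra : rev (a : ℝ) (Measure.dirac a) = a := by rw [rev_dirac]; simp
    have hb : BddAbove (Set.range fun x : Set.Icc (0:ℝ) M => rev x.1 (Measure.dirac a)) := by
      refine ⟨a, ?_⟩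
      rintro _ ⟨x, rfl⟩
      simp only
      rw [rev_dirac]; split
      · exact ‹x.1 ≤ a›
      · exact h0
    calc a = rev a (Measure.dirac a) := hra.symm
      _ ≤ _ := le_ciSup hb (⟨a, h0, hM⟩ : Set.Icc (0:ℝ) M)

lemma wass_dirac (M a b : ℝ) (h0 : 0 ≤ a) (hab : a ≤ b) (hbM : b ≤ M) :
    wassDist M (Measure.dirac a) (Measure.dirac b) = b - a := by
  unfold wassDist
  have hkey : ∀ t : ℝ, |cdf0 (Measure.dirac a) t - cdf0 (Measure.dirac b) t|
      = (Set.Ico a b).indicator (fun _ => (1:ℝ)) t := by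
    intro t
    rw [cdf0_dirac a t h0, cdf0_dirac b t (h0.trans hab)]
    by_cases h1 : a ≤ t
    · by_cases h2 : b ≤ t
      · simp [Set.indicator, Set.mem_Ico, h1, h2, not_lt.2 h2]
      · simp [Set.indicator, Set.mem_Ico, h1, h2, lt_of_not_ge h2]
    · have h2 : ¬ b ≤ t := fun h => h1 (hab.trans h)
      simp [Set.indicator, Set.mem_Ico, h1, h2]
  simp_rw [hkey]
  rw [setIntegral_indicator measurableSet_Ico,
    Set.inter_eq_self_of_subset_right (Set.Ico_subset_Icc_self.trans (Set.Icc_subset_Icc h0 hbM))]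
  simp [Real.volume_Ico, ENNReal.toReal_ofReal, sub_nonneg.2 hab]

lemma optRev_le_of_prob (M : ℝ) (hM : 0 ≤ M) (μ : Measure ℝ) [IsProbabilityMeasure μ] :
    optRev M μ ≤ M := by
  have hne : Nonempty (Set.Icc (0:ℝ) M) := ⟨⟨0, le_refl 0, hM⟩⟩
  apply ciSup_le
  intro x
  have h1 : (μ {ξ : ℝ | x.1 ≤ ξ}).toReal ≤ 1 := by
    simpa using ENNReal.toReal_mono ENNReal.one_ne_top prob_le_one
  show x.1 * (μ {ξ : ℝ | x.1 ≤ ξ}).toReal ≤ M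
  exact (mul_le_of_le_one_right x.2.1 h1).trans x.2.2

/-- Failure of SAA for pricing under Wasserstein heterogeneity: on the point-mass pair
`μ = δ_{M-η}`, `ν = δ_{min(M, M-η+ε)}` the SAA price earns zero revenue, and the
worst-case regret of SAA equals `M`. -/
theorem pricing_SAA_fails_wasserstein
    (M ε : ℝ) (hM : 0 < M) (hε : 0 < ε) :
    (∀ η ∈ Set.Ioo (0:ℝ) M,
      -- (i) the two point masses are within Wasserstein distance ε
      wassDist M (Measure.dirac (M - η)) (Measure.dirac (min M (M - η + ε))) ≤ ε ∧
      -- (ii) `x* = min(M, M-η+ε)` is the unique maximizer of `R(·,ν)` on `[0,M]`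
      ((∀ x ∈ Set.Icc (0:ℝ) M,
          rev x (Measure.dirac (min M (M - η + ε))) ≤
            rev (min M (M - η + ε)) (Measure.dirac (min M (M - η + ε)))) ∧
        (∀ x ∈ Set.Icc (0:ℝ) M,
          rev x (Measure.dirac (min M (M - η + ε))) =
            rev (min M (M - η + ε)) (Measure.dirac (min M (M - η + ε))) →
          x = min M (M - η + ε))) ∧
      -- (iii) this price earns zero against μ while opt(μ) = M - η
      rev (min M (M - η + ε)) (Measure.dirac (M - η)) = 0 ∧
      optRev M (Measure.dirac (M - η)) = M - η)
    ∧
    -- consequently, the worst-case regret of SAA equals M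
    sSup {r : ℝ | ∃ μ ν : Measure ℝ, IsProbabilityMeasure μ ∧ IsProbabilityMeasure ν ∧
      μ (Set.Icc 0 M) = 1 ∧ ν (Set.Icc 0 M) = 1 ∧ wassDist M μ ν ≤ ε ∧
      ∃ xν ∈ Set.Icc (0:ℝ) M, (∀ x ∈ Set.Icc (0:ℝ) M, rev x ν ≤ rev xν ν) ∧
        r = optRev M μ - rev xν μ} = M := by
  have hmain : ∀ η ∈ Set.Ioo (0:ℝ) M,
      wassDist M (Measure.dirac (M - η)) (Measure.dirac (min M (M - η + ε))) ≤ ε ∧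
      ((∀ x ∈ Set.Icc (0:ℝ) M,
          rev x (Measure.dirac (min M (M - η + ε))) ≤
            rev (min M (M - η + ε)) (Measure.dirac (min M (M - η + ε)))) ∧
        (∀ x ∈ Set.Icc (0:ℝ) M,
          rev x (Measure.dirac (min M (M - η + ε))) =
            rev (min M (M - η + ε)) (Measure.dirac (min M (M - η + ε))) →
          x = min M (M - η + ε))) ∧
      rev (min M (M - η + ε)) (Measure.dirac (M - η)) = 0 ∧
      optRev M (Measure.dirac (M - η)) = M - η := by
    intro η hη
    obtain ⟨hη0, hηM⟩ := hη
    set b := min M (M - η + ε) with hb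
    have ha0 : 0 < M - η := by linarith
    have hab : M - η < b := lt_min (by linarith) (by linarith)
    have hbM : b ≤ M := min_le_left _ _
    have hbε : b ≤ M - η + ε := min_le_right _ _
    have hb0 : 0 < b := ha0.trans hab
    refine ⟨?_, ⟨?_, ?_⟩, ?_, ?_⟩
    · rw [wass_dirac M (M - η) b ha0.le hab.le hbM]; linarith
    · intro x hx
      rw [rev_dirac, rev_dirac, if_pos le_rfl]
      split
      · exact ‹x ≤ b›
      · exact hb0.le
    · intro x hx h
      rw [rev_dirac, rev_dirac, if_pos le_rfl] at h
      by_cases hxb : x ≤ b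
      · rwa [if_pos hxb] at h
      · rw [if_neg hxb] at h; linarith
    · rw [rev_dirac, if_neg (not_le.2 hab)]
    · exact optRev_dirac M (M - η) ha0.le (by linarith)
  refine ⟨hmain, ?_⟩
  set S := {r : ℝ | ∃ μ ν : Measure ℝ, IsProbabilityMeasure μ ∧ IsProbabilityMeasure ν ∧
      μ (Set.Icc 0 M) = 1 ∧ ν (Set.Icc 0 M) = 1 ∧ wassDist M μ ν ≤ ε ∧
      ∃ xν ∈ Set.Icc (0:ℝ) M, (∀ x ∈ Set.Icc (0:ℝ) M, rev x ν ≤ rev xν ν) ∧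
        r = optRev M μ - rev xν μ} with hS
  have hub : ∀ r ∈ S, r ≤ M := by
    rintro r ⟨μ, ν, hμ, hν, hμs, hνs, hw, xν, hxν, hmax, rfl⟩
    have h1 : optRev M μ ≤ M := optRev_le_of_prob M hM.le μ
    have h2 : 0 ≤ rev xν μ := mul_nonneg hxν.1 ENNReal.toReal_nonneg
    linarith
  have hmem : ∀ η ∈ Set.Ioo (0:ℝ) M, (M - η) ∈ S := by
    intro η hη
    obtain ⟨hη0, hηM⟩ := hη
    obtain ⟨hi, ⟨hii1, _⟩, hiii1, hiii2⟩ := hmain η ⟨hη0, hηM⟩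
    set b := min M (M - η + ε) with hb
    have ha0 : 0 < M - η := by linarith
    have hab : M - η < b := lt_min (by linarith) (by linarith)
    have hbM : b ≤ M := min_le_left _ _
    refine ⟨Measure.dirac (M - η), Measure.dirac b, inferInstance, inferInstance,
      ?_, ?_, hi, b, ⟨(ha0.trans hab).le, hbM⟩, hii1, ?_⟩
    · exact Measure.dirac_apply_of_mem ⟨ha0.le, by linarith⟩
    · exact Measure.dirac_apply_of_mem ⟨(ha0.trans hab).le, hbM⟩
    · rw [hiii1, hiii2, sub_zero]
  apply le_antisymm
  · exact csSup_le ⟨M - M/2, hmem (M/2) ⟨half_pos hM, half_lt_self hM⟩⟩ hub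
  · apply le_of_forall_pos_le_add
    intro δ hδ
    set η := min δ M / 2 with hη
    have h1 : 0 < min δ M := lt_min hδ hM
    have hη0 : 0 < η := by positivity
    have hηM : η < M := by
      have := min_le_right δ M; simp only [hη]; linarith
    have hηδ : η < δ := by
      have := min_le_left δ M; simp only [hη]; linarith
    have hle : M - η ≤ sSup S := le_csSup ⟨M, hub⟩ (hmem η ⟨hη0, hηM⟩)
    linarith

end
end

section
/- Fix M > 0 and ε ≥ 0. Let μ and ν be Borel probability measures on [0,M] with d_K(μ,ν) ≤ ε, and let x_ν ∈ [0,M] satisfy R(x_ν,ν) = opt(ν). Then opt(μ) − R(x_ν,μ) ≤ 2·M·ε. -/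
open MeasureTheory

noncomputable section

/-- Kolmogorov distance: `sup_{t ∈ ℝ} |F(t) - H(t)|`. -/
def kolDist (μ ν : Measure ℝ) : ℝ := ⨆ t : ℝ, |cdf0 μ t - cdf0 ν t|

lemma cdf0_mem (μ : Measure ℝ) [IsProbabilityMeasure μ] (t : ℝ) :
    cdf0 μ t ∈ Set.Icc (0:ℝ) 1 := by
  constructor
  · exact ENNReal.toReal_nonneg
  · exact ENNReal.toReal_le_of_le_ofReal zero_le_one (by simpa using prob_le_one)

lemma kolDist_pointwise (μ ν : Measure ℝ) [IsProbabilityMeasure μ] [IsProbabilityMeasure ν]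
    (t : ℝ) : |cdf0 μ t - cdf0 ν t| ≤ kolDist μ ν := by
  apply le_ciSup (f := fun t => |cdf0 μ t - cdf0 ν t|)
  refine ⟨1, ?_⟩
  rintro y ⟨s, rfl⟩
  have h1 := cdf0_mem μ s
  have h2 := cdf0_mem ν s
  rw [abs_sub_le_iff]
  constructor <;> [linarith [h1.2, h2.1]; linarith [h1.1, h2.2]]

/-- tail measure in terms of `Ico 0 x` measure. -/
lemma tail_eq (M : ℝ) (μ : Measure ℝ) [IsProbabilityMeasure μ]
    (hμ : μ (Set.Icc 0 M) = 1) (x : ℝ) (hx : x ∈ Set.Icc (0:ℝ) M) :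
    (μ {ξ : ℝ | x ≤ ξ}).toReal = 1 - (μ (Set.Ico 0 x)).toReal := by
  have hc : μ (Set.Icc 0 M)ᶜ = 0 :=
    (prob_compl_eq_zero_iff measurableSet_Icc).2 hμ
  have hIio : μ (Set.Iio x) = μ (Set.Ico 0 x) := by
    rw [← measure_inter_conull (s := Set.Iio x) hc]
    congr 1
    ext ξ
    simp only [Set.mem_inter_iff, Set.mem_Iio, Set.mem_Icc, Set.mem_Ico]
    constructor
    · rintro ⟨h1, h2, _⟩; exact ⟨h2, h1⟩
    · rintro ⟨h1, h2⟩; exact ⟨h2, h1, le_trans (le_of_lt h2) hx.2⟩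
  have hcompl : {ξ : ℝ | x ≤ ξ} = (Set.Iio x)ᶜ := by
    ext ξ; simp [not_lt]
  have hsum : μ (Set.Iio x) + μ (Set.Iio x)ᶜ = 1 := by
    rw [measure_add_measure_compl measurableSet_Iio, measure_univ]
  have h1 : (μ (Set.Iio x)).toReal + (μ (Set.Iio x)ᶜ).toReal = 1 := by
    rw [← ENNReal.toReal_add (measure_ne_top μ _) (measure_ne_top μ _), hsum]
    simp
  rw [hcompl, ← hIio]
  linarith

lemma ico_tendsto (μ : Measure ℝ) [IsProbabilityMeasure μ] (x : ℝ) :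
    Filter.Tendsto (fun n : ℕ => cdf0 μ (x - 1/(n+1))) Filter.atTop
      (nhds (μ (Set.Ico 0 x)).toReal) := by
  have hmono : Monotone (fun n : ℕ => Set.Icc (0:ℝ) (x - 1/(n+1))) := by
    intro n m hnm
    apply Set.Icc_subset_Icc le_rfl
    have h1 : (1:ℝ)/(m+1) ≤ 1/(n+1) := by
      apply one_div_le_one_div_of_le
      · positivity
      · exact_mod_cast by omega
    linarith
  have hunion : ⋃ n : ℕ, Set.Icc (0:ℝ) (x - 1/(n+1)) = Set.Ico 0 x := by
    ext ξ
    simp only [Set.mem_iUnion, Set.mem_Icc, Set.mem_Ico]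
    constructor
    · rintro ⟨n, h1, h2⟩
      refine ⟨h1, lt_of_le_of_lt h2 ?_⟩
      have : (0:ℝ) < 1/(n+1) := by positivity
      linarith
    · rintro ⟨h1, h2⟩
      obtain ⟨n, hn⟩ := exists_nat_one_div_lt (show (0:ℝ) < x - ξ by linarith)
      exact ⟨n, h1, by linarith⟩
  have h := tendsto_measure_iUnion_atTop (μ := μ) hmono
  rw [hunion] at h
  exact (ENNReal.tendsto_toReal (measure_ne_top μ _)).comp h

lemma ico_diff_le (ε : ℝ) (μ ν : Measure ℝ) [IsProbabilityMeasure μ] [IsProbabilityMeasure ν]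
    (hK : kolDist μ ν ≤ ε) (x : ℝ) :
    |(μ (Set.Ico 0 x)).toReal - (ν (Set.Ico 0 x)).toReal| ≤ ε := by
  have h : Filter.Tendsto
      (fun n : ℕ => |cdf0 μ (x - 1/(n+1)) - cdf0 ν (x - 1/(n+1))|) Filter.atTop
      (nhds |(μ (Set.Ico 0 x)).toReal - (ν (Set.Ico 0 x)).toReal|) :=
    ((ico_tendsto μ x).sub (ico_tendsto ν x)).abs
  exact le_of_tendsto h (Filter.Eventually.of_forall fun n =>
    (kolDist_pointwise μ ν _).trans hK)

lemma rev_diff_le (M ε : ℝ) (μ ν : Measure ℝ)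
    [IsProbabilityMeasure μ] [IsProbabilityMeasure ν]
    (hμ : μ (Set.Icc 0 M) = 1) (hν : ν (Set.Icc 0 M) = 1)
    (hK : kolDist μ ν ≤ ε) (x : ℝ) (hx : x ∈ Set.Icc (0:ℝ) M) :
    |rev x μ - rev x ν| ≤ M * ε := by
  have h1 := tail_eq M μ hμ x hx
  have h2 := tail_eq M ν hν x hx
  have hdiff := ico_diff_le ε μ ν hK x
  have : |rev x μ - rev x ν|
      = x * |(ν (Set.Ico 0 x)).toReal - (μ (Set.Ico 0 x)).toReal| := by
    rw [rev, rev, h1, h2, ← mul_sub, abs_mul, abs_of_nonneg hx.1]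
    ring_nf
  rw [this, abs_sub_comm]
  have hε : 0 ≤ ε := le_trans (abs_nonneg _) hdiff
  calc x * |(μ (Set.Ico 0 x)).toReal - (ν (Set.Ico 0 x)).toReal|
      ≤ M * ε := mul_le_mul hx.2 hdiff (abs_nonneg _) (le_trans hx.1 hx.2)

lemma rev_le (M : ℝ) (ν : Measure ℝ) [IsProbabilityMeasure ν]
    (x : Set.Icc (0:ℝ) M) : rev x.1 ν ≤ optRev M ν := by
  apply le_ciSup (f := fun x : Set.Icc (0:ℝ) M => rev x.1 ν)
  refine ⟨M, ?_⟩
  rintro y ⟨s, rfl⟩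
  have h1 : (ν {ξ : ℝ | s.1 ≤ ξ}).toReal ≤ 1 :=
    ENNReal.toReal_le_of_le_ofReal zero_le_one (by simpa using prob_le_one)
  have := s.2
  calc rev s.1 ν = s.1 * (ν {ξ : ℝ | s.1 ≤ ξ}).toReal := rfl
    _ ≤ M * 1 := mul_le_mul s.2.2 h1 ENNReal.toReal_nonneg (le_trans s.2.1 s.2.2)
    _ = M := mul_one M

/-- SAA regret bound for pricing under Kolmogorov heterogeneity:
`opt(μ) - R(x_ν, μ) ≤ 2Mε` whenever `d_K(μ,ν) ≤ ε`. -/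
theorem pricing_SAA_kolmogorov
    (M ε : ℝ) (hM : 0 < M) (hε : 0 ≤ ε)
    (μ ν : Measure ℝ) [IsProbabilityMeasure μ] [IsProbabilityMeasure ν]
    (hμ : μ (Set.Icc 0 M) = 1) (hν : ν (Set.Icc 0 M) = 1)
    (hK : kolDist μ ν ≤ ε)
    (xν : ℝ) (hmem : xν ∈ Set.Icc (0:ℝ) M) (hopt : rev xν ν = optRev M ν) :
    optRev M μ - rev xν μ ≤ 2 * M * ε := by
  have hK' : kolDist ν μ ≤ ε := by
    have : kolDist ν μ = kolDist μ ν := by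
      unfold kolDist
      congr 1; ext t; rw [abs_sub_comm]
    rwa [this]
  haveI : Nonempty (Set.Icc (0:ℝ) M) := ⟨⟨0, le_rfl, hM.le⟩⟩
  have h1 : optRev M μ ≤ optRev M ν + M * ε := by
    apply ciSup_le
    intro x
    have hb := rev_diff_le M ε μ ν hμ hν hK x.1 x.2
    have := rev_le M ν x
    have := abs_sub_le_iff.1 hb
    linarith [this.1]
  have h2 : rev xν ν - rev xν μ ≤ M * ε := by
    have hb := rev_diff_le M ε ν μ hν hμ hK' xν hmem
    linarith [(abs_sub_le_iff.1 hb).1]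
  linarith [hopt ▸ h2, h1]

end
end

section
/- Fix M > 0 and c_u, c_o > 0, and let q = c_u/(c_u + c_o). For 0 < ε ≤ min(q, 1−q), define the two-point Borel probability measures on [0,M]: μ₊ = (1−q+ε)·δ_M + (q−ε)·δ₀ and μ₋ = (1−q−ε)·δ_M + (q+ε)·δ₀, and let ν̃ = (1−q)·δ_M + q·δ₀. Then d_TV(ν̃,μ₊) = ε and d_TV(ν̃,μ₋) = ε, and for every inventory level x ∈ [0,M], (1/2)·(C(x,μ₊) − opt(μ₊)) + (1/2)·(C(x,μ₋) − opt(μ₋)) = ((c_u + c_o)/2)·M·ε. -/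
/-!
The cost of a two-point law on `{0, M}` is affine in `x`, so its minimum over `[0, M]` sits at an
endpoint. With `q` the critical ratio, `(1 - q) cu = q co`; tilting the mass by `ε` in either
direction makes one endpoint optimal for `μ₊` and the other for `μ₋`, and averaging the two
regrets cancels the dependence on `x`, leaving `(cu + co) M ε / 2`.
-/

open MeasureTheory

noncomputable section

/-- Expected newsvendor cost with underage cost `cu` and overage cost `co`. -/
def nvCost (cu co x : ℝ) (μ : Measure ℝ) : ℝ :=
  ∫ ξ, (cu * max (ξ - x) 0 + co * max (x - ξ) 0) ∂μ

/-- Optimal newsvendor cost `opt(μ) = inf_{x ∈ [0,M]} C(x,μ)`. -/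
def optNv (cu co M : ℝ) (μ : Measure ℝ) : ℝ :=
  ⨅ x : Set.Icc (0:ℝ) M, nvCost cu co x.1 μ

/-- Total variation distance: `sup` over Borel sets `A` of `|μ(A) - ν(A)|`. -/
def tvDist (μ ν : Measure ℝ) : ℝ :=
  ⨆ A : {A : Set ℝ // MeasurableSet A}, |(μ A.1).toReal - (ν A.1).toReal|

section TwoPoint

variable {α : Type*} [MeasurableSpace α]

theorem integral_twoPoint [MeasurableSingletonClass α] {E : Type*} [NormedAddCommGroup E]
    [NormedSpace ℝ E] [CompleteSpace E] (f : α → E) {a b : ℝ} (ha : 0 ≤ a) (hb : 0 ≤ b)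
    (p r : α) :
    ∫ ξ, f ξ ∂(ENNReal.ofReal a • Measure.dirac p + ENNReal.ofReal b • Measure.dirac r)
      = a • f p + b • f r := by
  rw [integral_add_measure
      ((integrable_dirac enorm_lt_top).smul_measure ENNReal.ofReal_ne_top)
      ((integrable_dirac enorm_lt_top).smul_measure ENNReal.ofReal_ne_top),
    integral_smul_measure, integral_smul_measure, integral_dirac, integral_dirac,
    ENNReal.toReal_ofReal ha, ENNReal.toReal_ofReal hb]

open Classical in
theorem toReal_twoPoint_apply {a b : ℝ} (ha : 0 ≤ a) (hb : 0 ≤ b) (p r : α)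
    {A : Set α} (hA : MeasurableSet A) :
    ((ENNReal.ofReal a • Measure.dirac p + ENNReal.ofReal b • Measure.dirac r) A).toReal
      = (if p ∈ A then a else 0) + (if r ∈ A then b else 0) := by
  rw [Measure.add_apply, Measure.smul_apply, Measure.smul_apply,
    Measure.dirac_apply' _ hA, Measure.dirac_apply' _ hA]
  by_cases hp : p ∈ A <;> by_cases hr : r ∈ A <;>
    simp [hp, hr, ENNReal.toReal_add, ha, hb]

end TwoPoint

theorem tvDist_twoPoint {a b a' b' : ℝ} (ha : 0 ≤ a) (hb : 0 ≤ b) (ha' : 0 ≤ a')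
    (hb' : 0 ≤ b') (hmass : a + b = a' + b') {p r : ℝ} (hpr : p ≠ r) :
    tvDist (ENNReal.ofReal a • Measure.dirac p + ENNReal.ofReal b • Measure.dirac r)
      (ENNReal.ofReal a' • Measure.dirac p + ENNReal.ofReal b' • Measure.dirac r)
      = |b - b'| := by
  have hbound : ∀ A : {A : Set ℝ // MeasurableSet A},
      |((ENNReal.ofReal a • Measure.dirac p + ENNReal.ofReal b • Measure.dirac r) A.1).toReal
        - ((ENNReal.ofReal a' • Measure.dirac p + ENNReal.ofReal b' • Measure.dirac r)
          A.1).toReal| ≤ |b - b'| := by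
    rintro ⟨A, hA⟩
    rw [toReal_twoPoint_apply ha hb p r hA, toReal_twoPoint_apply ha' hb' p r hA]
    by_cases hp : p ∈ A <;> by_cases hr : r ∈ A <;> simp only [hp, hr, if_true, if_false]
    · rw [show a + b - (a' + b') = 0 by linarith, abs_zero]
      exact abs_nonneg _
    · rw [show a + 0 - (a' + 0) = -(b - b') by linarith, abs_neg]
    · rw [show 0 + b - (0 + b') = b - b' by ring]
    · simp
  refine le_antisymm (ciSup_le hbound) (le_ciSup_of_le ⟨_, Set.forall_mem_range.2 hbound⟩
    ⟨{r}, measurableSet_singleton r⟩ (le_of_eq ?_))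
  rw [toReal_twoPoint_apply ha hb p r (measurableSet_singleton r),
    toReal_twoPoint_apply ha' hb' p r (measurableSet_singleton r)]
  simp [hpr]

theorem nvCost_twoPoint (cu co : ℝ) {a b : ℝ} (ha : 0 ≤ a) (hb : 0 ≤ b) {x M : ℝ}
    (hx : x ∈ Set.Icc 0 M) :
    nvCost cu co x (ENNReal.ofReal a • Measure.dirac M + ENNReal.ofReal b • Measure.dirac 0)
      = a * cu * (M - x) + b * co * x := by
  obtain ⟨hx0, hxM⟩ := hx
  rw [nvCost, integral_twoPoint _ ha hb, max_eq_left (by linarith), max_eq_right (by linarith),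
    max_eq_right (by linarith), max_eq_left (by linarith), smul_eq_mul, smul_eq_mul]
  ring

theorem optNv_twoPoint (cu co : ℝ) {a b M : ℝ} (ha : 0 ≤ a) (hb : 0 ≤ b) (hM : 0 ≤ M) :
    optNv cu co M (ENNReal.ofReal a • Measure.dirac M + ENNReal.ofReal b • Measure.dirac 0)
      = M * min (a * cu) (b * co) := by
  have h0 : (0 : ℝ) ∈ Set.Icc 0 M := ⟨le_rfl, hM⟩
  have hMM : M ∈ Set.Icc 0 M := ⟨hM, le_rfl⟩
  have : Nonempty (Set.Icc (0 : ℝ) M) := ⟨⟨0, h0⟩⟩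
  have hlower : ∀ x : Set.Icc (0 : ℝ) M, M * min (a * cu) (b * co) ≤ nvCost cu co x.1
      (ENNReal.ofReal a • Measure.dirac M + ENNReal.ofReal b • Measure.dirac 0) := by
    rintro ⟨x, hx⟩
    rw [nvCost_twoPoint cu co ha hb hx]
    have h₁ := mul_le_mul_of_nonneg_right (min_le_left (a * cu) (b * co)) (sub_nonneg.2 hx.2)
    have h₂ := mul_le_mul_of_nonneg_right (min_le_right (a * cu) (b * co)) hx.1
    linarith
  have hbdd := (⟨_, Set.forall_mem_range.2 hlower⟩ : BddBelow (Set.range _))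
  refine le_antisymm ?_ (le_ciInf hlower)
  rw [mul_min_of_nonneg _ _ hM]
  refine le_min ((ciInf_le hbdd ⟨0, h0⟩).trans_eq ?_)
    ((ciInf_le hbdd ⟨M, hMM⟩).trans_eq ?_) <;>
    simp only [nvCost_twoPoint cu co ha hb h0, nvCost_twoPoint cu co ha hb hMM] <;> ring

/-- Two-point Bayesian lower bound of size `((cu+co)/2)·M·ε` for the newsvendor problem
under total variation heterogeneity. -/
theorem newsvendor_tv_lower_bound
    (M cu co ε : ℝ) (hM : 0 < M) (hcu : 0 < cu) (hco : 0 < co)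
    (q : ℝ) (hq : q = cu / (cu + co))
    (hε : 0 < ε) (hε2 : ε ≤ min q (1 - q))
    (νt μp μm : Measure ℝ)
    (hμp : μp = ENNReal.ofReal (1 - q + ε) • Measure.dirac M +
                ENNReal.ofReal (q - ε) • Measure.dirac 0)
    (hμm : μm = ENNReal.ofReal (1 - q - ε) • Measure.dirac M +
                ENNReal.ofReal (q + ε) • Measure.dirac 0)
    (hνt : νt = ENNReal.ofReal (1 - q) • Measure.dirac M +
                ENNReal.ofReal q • Measure.dirac 0) :
    tvDist νt μp = ε ∧ tvDist νt μm = ε ∧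
    ∀ x ∈ Set.Icc (0:ℝ) M,
      (1/2) * (nvCost cu co x μp - optNv cu co M μp) +
        (1/2) * (nvCost cu co x μm - optNv cu co M μm) =
      ((cu + co) / 2) * M * ε := by
  obtain ⟨hεq, hεq'⟩ := le_min_iff.1 hε2
  have hcritical : (1 - q) * cu = q * co := by
    rw [hq]; field_simp; ring
  have hoptp : optNv cu co M μp = M * ((1 - q) * cu - ε * co) := by
    rw [hμp, optNv_twoPoint cu co (by linarith) (by linarith) hM.le,
      min_eq_right (by nlinarith)]
    linear_combination (-M) * hcritical
  have hoptm : optNv cu co M μm = M * ((1 - q) * cu - ε * cu) := by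
    rw [hμm, optNv_twoPoint cu co (by linarith) (by linarith) hM.le,
      min_eq_left (by nlinarith)]
    ring
  refine ⟨?_, ?_, fun x hx => ?_⟩
  · rw [hνt, hμp, tvDist_twoPoint (by linarith) (by linarith) (by linarith) (by linarith)
      (by ring) hM.ne', sub_sub_cancel, abs_of_pos hε]
  · rw [hνt, hμm, tvDist_twoPoint (by linarith) (by linarith) (by linarith) (by linarith)
      (by ring) hM.ne', sub_add_cancel_left, abs_neg, abs_of_pos hε]
  · rw [hoptp, hoptm, hμp, hμm, nvCost_twoPoint cu co (by linarith) (by linarith) hx,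
      nvCost_twoPoint cu co (by linarith) (by linarith) hx]
    linear_combination (-x) * hcritical

end
end

section
/- Fix M > 0 and b > 0. For all Borel probability measures μ and ν on [0,M] and every x ∈ [0,M]: (i) |S(x,μ) − S(x,ν)| ≤ (x + b)·d_K(μ,ν), and in particular |S(x,μ) − S(x,ν)| ≤ (M + b)·d_K(μ,ν); (ii) |S(x,μ) − S(x,ν)| ≤ b + d_W(μ,ν). -/
open MeasureTheory

noncomputable section

/-- Expected ski-rental cost with buying cost `b`. -/
def skiCost (b x : ℝ) (μ : Measure ℝ) : ℝ :=
  ∫ ξ, (if ξ ≤ x then ξ else b + x) ∂μ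

/-!
For a measure carried by `[0, ∞)`, `cdf0` agrees with Mathlib's `cdf` and the integrand of
`skiCost` is `min ξ x + b · 1{ξ > x}`, so the tail formula gives
`S(x, μ) = b (1 - F x) + ∫₀ˣ (1 - F t) dt` and hence
`S(x, μ) - S(x, ν) = b (H x - F x) + ∫₀ˣ (H t - F t) dt`.
The atom term is at most `b · d_K` and at most `b`; the integral is at most `x · d_K` and,
since `x ≤ M`, at most `d_W`.
-/

open Set ProbabilityTheory

section NonnegSupport

variable {μ : Measure ℝ}

lemma ae_min_nonneg (h0 : μ (Iio 0) = 0) {x : ℝ} (hx : 0 ≤ x) :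
    ∀ᵐ ξ ∂μ, 0 ≤ min ξ x :=
  (measure_eq_zero_iff_ae_notMem.1 h0).mono fun _ hξ ↦ le_min (not_lt.1 hξ) hx

lemma integrable_min_const [IsFiniteMeasure μ] (h0 : μ (Iio 0) = 0) {x : ℝ} (hx : 0 ≤ x) :
    Integrable (fun ξ ↦ min ξ x) μ := by
  refine Integrable.of_bound (by fun_prop) x ?_
  filter_upwards [ae_min_nonneg h0 hx] with ξ hξ
  rw [Real.norm_eq_abs, abs_of_nonneg hξ]
  exact min_le_right ξ x

variable [IsProbabilityMeasure μ]

lemma measure_Iio_zero_eq_zero_of_measure_Icc_eq_one {M : ℝ} (hμ : μ (Icc 0 M) = 1) :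
    μ (Iio 0) = 0 := by
  have hsub : Iio (0 : ℝ) ⊆ (Icc 0 M)ᶜ := fun ξ hξ h ↦ (not_le.2 hξ) h.1
  exact measure_mono_null hsub ((prob_compl_eq_zero_iff measurableSet_Icc).2 hμ)

lemma cdf0_eq_cdf (h0 : μ (Iio 0) = 0) : cdf0 μ = cdf μ := by
  funext t
  have hconull : μ (Ici 0)ᶜ = 0 := by rwa [compl_Ici]
  rw [cdf0, cdf_eq_real, measureReal_def, ← Ici_inter_Iic, inter_comm,
    measure_inter_conull hconull]

lemma measureReal_Ioi_eq_one_sub_cdf (t : ℝ) : μ.real (Ioi t) = 1 - cdf μ t := by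
  rw [← compl_Iic, probReal_compl_eq_one_sub measurableSet_Iic, cdf_eq_real]

lemma measureReal_setOf_lt_min (x t : ℝ) :
    μ.real {ξ | t < min ξ x} = (Iio x).indicator (fun t ↦ 1 - cdf μ t) t := by
  by_cases htx : t < x
  · have hlevel : {ξ | t < min ξ x} = Ioi t := by ext ξ; simp [htx]
    rw [indicator_of_mem (show t ∈ Iio x from htx), hlevel, measureReal_Ioi_eq_one_sub_cdf]
  · have hlevel : {ξ | t < min ξ x} = ∅ := by ext ξ; simp [htx]
    rw [indicator_of_notMem (show t ∉ Iio x from htx), hlevel, measureReal_empty]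

lemma integral_min_eq_integral_one_sub_cdf (h0 : μ (Iio 0) = 0) {x : ℝ} (hx : 0 ≤ x) :
    ∫ ξ, min ξ x ∂μ = ∫ t in Ioo 0 x, (1 - cdf μ t) := by
  rw [(integrable_min_const h0 hx).integral_eq_integral_meas_lt (ae_min_nonneg h0 hx),
    funext (measureReal_setOf_lt_min x), setIntegral_indicator measurableSet_Iio,
    Ioi_inter_Iio]

lemma skiCost_eq_integral_one_sub_cdf (h0 : μ (Iio 0) = 0) (b : ℝ) {x : ℝ} (hx : 0 ≤ x) :
    skiCost b x μ = b * (1 - cdf μ x) + ∫ t in Ioo 0 x, (1 - cdf μ t) := by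
  have hsplit : (fun ξ ↦ if ξ ≤ x then ξ else b + x)
      = fun ξ ↦ (Ioi x).indicator (fun _ ↦ b) ξ + min ξ x := by
    funext ξ
    by_cases hξ : ξ ≤ x
    · simp [hξ]
    · simp [hξ, not_le.1 hξ, (not_le.1 hξ).le]
  rw [skiCost, hsplit, integral_add ((integrable_const b).indicator measurableSet_Ioi)
    (integrable_min_const h0 hx), integral_indicator_const b measurableSet_Ioi,
    measureReal_Ioi_eq_one_sub_cdf, integral_min_eq_integral_one_sub_cdf h0 hx, smul_eq_mul,
    mul_comm]

end NonnegSupport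

lemma integrableOn_cdf (μ : Measure ℝ) {s : Set ℝ} (hs : Bornology.IsBounded s) :
    IntegrableOn (cdf μ) s :=
  ((monotone_cdf μ).locallyIntegrable.integrableOn_isCompact hs.isCompact_closure).mono_set
    subset_closure

lemma abs_cdf_sub_cdf_le_one (μ ν : Measure ℝ) (t : ℝ) : |cdf μ t - cdf ν t| ≤ 1 := by
  rw [abs_sub_le_iff]
  constructor <;> linarith [cdf_nonneg μ t, cdf_le_one μ t, cdf_nonneg ν t, cdf_le_one ν t]

section TwoMeasures

variable {μ ν : Measure ℝ} [IsProbabilityMeasure μ] [IsProbabilityMeasure ν]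

lemma abs_cdf_sub_cdf_le_kolDist (h0μ : μ (Iio 0) = 0) (h0ν : ν (Iio 0) = 0) (t : ℝ) :
    |cdf μ t - cdf ν t| ≤ kolDist μ ν := by
  rw [kolDist, cdf0_eq_cdf h0μ, cdf0_eq_cdf h0ν]
  exact le_ciSup ⟨1, forall_mem_range.2 (abs_cdf_sub_cdf_le_one μ ν)⟩ t

lemma abs_setIntegral_cdf_sub_cdf_le_kolDist_mul (h0μ : μ (Iio 0) = 0) (h0ν : ν (Iio 0) = 0)
    {x : ℝ} (hx : 0 ≤ x) :
    |∫ t in Ioo 0 x, (cdf μ t - cdf ν t)| ≤ kolDist μ ν * x := by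
  have hbound : ∀ t ∈ Ioo 0 x, ‖cdf μ t - cdf ν t‖ ≤ kolDist μ ν :=
    fun t _ ↦ abs_cdf_sub_cdf_le_kolDist h0μ h0ν t
  simpa [Real.volume_real_Ioo_of_le hx] using
    norm_setIntegral_le_of_norm_le_const (μ := volume) measure_Ioo_lt_top hbound

lemma abs_setIntegral_cdf_sub_cdf_le_wassDist (h0μ : μ (Iio 0) = 0) (h0ν : ν (Iio 0) = 0)
    {x M : ℝ} (hxM : x ≤ M) :
    |∫ t in Ioo 0 x, (cdf μ t - cdf ν t)| ≤ wassDist M μ ν := by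
  refine abs_integral_le_integral_abs.trans ?_
  rw [wassDist, cdf0_eq_cdf h0μ, cdf0_eq_cdf h0ν]
  refine setIntegral_mono_set ?_ (ae_of_all _ fun _ ↦ abs_nonneg _)
    (Ioo_subset_Icc_self.trans (Icc_subset_Icc_right hxM)).eventuallyLE
  exact ((integrableOn_cdf μ (Metric.isBounded_Icc 0 M)).sub
    (integrableOn_cdf ν (Metric.isBounded_Icc 0 M))).abs

lemma skiCost_sub_skiCost (h0μ : μ (Iio 0) = 0) (h0ν : ν (Iio 0) = 0) (b : ℝ) {x : ℝ}
    (hx : 0 ≤ x) :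
    skiCost b x ν - skiCost b x μ
      = b * (cdf μ x - cdf ν x) + ∫ t in Ioo 0 x, (cdf μ t - cdf ν t) := by
  have hμint : IntegrableOn (cdf μ) (Ioo 0 x) :=
    integrableOn_cdf μ (Metric.isBounded_Ioo 0 x)
  have hνint : IntegrableOn (cdf ν) (Ioo 0 x) :=
    integrableOn_cdf ν (Metric.isBounded_Ioo 0 x)
  have hone : IntegrableOn (fun _ ↦ (1 : ℝ)) (Ioo 0 x) := integrableOn_const (by simp)
  rw [skiCost_eq_integral_one_sub_cdf h0μ b hx, skiCost_eq_integral_one_sub_cdf h0ν b hx,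
    integral_sub hμint hνint, integral_sub hone hμint, integral_sub hone hνint]
  ring

end TwoMeasures

theorem ski_rental_cost_sensitivity_general
    (M b : ℝ) (hb : 0 < b)
    (μ ν : Measure ℝ) [IsProbabilityMeasure μ] [IsProbabilityMeasure ν]
    (hμ : μ (Set.Icc 0 M) = 1) (hν : ν (Set.Icc 0 M) = 1)
    (x : ℝ) (hx : x ∈ Set.Icc (0:ℝ) M) :
    (|skiCost b x μ - skiCost b x ν| ≤ (x + b) * kolDist μ ν ∧
      |skiCost b x μ - skiCost b x ν| ≤ (M + b) * kolDist μ ν) ∧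
    |skiCost b x μ - skiCost b x ν| ≤ b + wassDist M μ ν := by
  obtain ⟨hx0, hxM⟩ := hx
  have h0μ := measure_Iio_zero_eq_zero_of_measure_Icc_eq_one hμ
  have h0ν := measure_Iio_zero_eq_zero_of_measure_Icc_eq_one hν
  have hK := abs_cdf_sub_cdf_le_kolDist h0μ h0ν
  have hK0 : 0 ≤ kolDist μ ν := (abs_nonneg _).trans (hK 0)
  have hintK := abs_setIntegral_cdf_sub_cdf_le_kolDist_mul h0μ h0ν hx0
  have hintW := abs_setIntegral_cdf_sub_cdf_le_wassDist h0μ h0ν hxM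
  have hatom : |b * (cdf μ x - cdf ν x)| = b * |cdf μ x - cdf ν x| := by
    rw [abs_mul, abs_of_pos hb]
  rw [abs_sub_comm, skiCost_sub_skiCost h0μ h0ν b hx0]
  refine ⟨⟨?_, ?_⟩, ?_⟩ <;> refine (abs_add_le _ _).trans ?_ <;> rw [hatom]
  · nlinarith [hK x]
  · nlinarith [hK x]
  · nlinarith [abs_cdf_sub_cdf_le_one μ ν x]

/-- Sensitivity of the expected ski-rental cost in the distribution, for the Kolmogorov
and Wasserstein distances. -/
theorem ski_rental_cost_sensitivity
    (M b : ℝ) (hM : 0 < M) (hb : 0 < b)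
    (μ ν : Measure ℝ) [IsProbabilityMeasure μ] [IsProbabilityMeasure ν]
    (hμ : μ (Set.Icc 0 M) = 1) (hν : ν (Set.Icc 0 M) = 1)
    (x : ℝ) (hx : x ∈ Set.Icc (0:ℝ) M) :
    (|skiCost b x μ - skiCost b x ν| ≤ (x + b) * kolDist μ ν ∧
      |skiCost b x μ - skiCost b x ν| ≤ (M + b) * kolDist μ ν) ∧
    |skiCost b x μ - skiCost b x ν| ≤ b + wassDist M μ ν :=
  ski_rental_cost_sensitivity_general M b hb μ ν hμ hν x hx

end
end

section
/- Fix M > 0 and b > 0, and let μ and ν be Borel probability measures on [0,M]. Write opt(μ) = inf_{x ∈ [0,M]} S(x,μ). Then: (i) opt(μ) − opt(ν) ≤ 2·√(b·d_W(μ,ν)) + d_W(μ,ν); (ii) for every δ > 0, if x_ν ∈ [0,M] satisfies S(x_ν,ν) = opt(ν) and p = min(x_ν + δ, M), then S(p,μ) − opt(ν) ≤ b·d_W(μ,ν)/δ + d_W(μ,ν) + δ. -/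
open MeasureTheory

noncomputable section

/-- Optimal ski-rental cost `opt(μ) = inf_{x ∈ [0,M]} S(x,μ)`. -/
def optSki (b M : ℝ) (μ : Measure ℝ) : ℝ := ⨅ x : Set.Icc (0:ℝ) M, skiCost b x.1 μ

/-!
Write `F`, `H` for the distribution functions of `μ`, `ν`. For `μ` supported in `[0, ∞)` Fubini gives
`S(x, μ) = b + x - b F(x) - ∫₀ˣ F`. Comparing `S(p, μ)` with `S(x, ν)` for `p = min(x + δ, M)`,
the integral terms differ by at most `W = d_W(μ, ν)`, and since `H(x) - F(p) ≤ H(t) - F(t)` on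
`[x, p]`, the jump terms differ by at most `b W / δ`. This is (ii); optimising over `x` and then
choosing `δ = √(b W)` gives (i).
-/

open Set

lemma cdf0_nonneg (μ : Measure ℝ) (t : ℝ) : 0 ≤ cdf0 μ t := ENNReal.toReal_nonneg

lemma cdf0_le_one (μ : Measure ℝ) [IsZeroOrProbabilityMeasure μ] (t : ℝ) : cdf0 μ t ≤ 1 :=
  measureReal_le_one

lemma integrableOn_cdf0 (μ : Measure ℝ) [IsFiniteMeasure μ] (a c : ℝ) :
    IntegrableOn (cdf0 μ) (Icc a c) :=
  (cdf0_mono μ).locallyIntegrable.integrableOn_isCompact isCompact_Icc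

lemma setIntegral_abs_cdf0_sub_le_wassDist {M a c : ℝ} (h : Icc a c ⊆ Icc 0 M)
    (μ ν : Measure ℝ) [IsFiniteMeasure μ] [IsFiniteMeasure ν] :
    ∫ t in Icc a c, |cdf0 μ t - cdf0 ν t| ≤ wassDist M μ ν :=
  setIntegral_mono_set ((integrableOn_cdf0 μ 0 M).sub (integrableOn_cdf0 ν 0 M)).abs
    (ae_of_all _ fun _ => abs_nonneg _) h.eventuallyLE

lemma setIntegral_cdf0_sub_le_wassDist {M x : ℝ} (hx : x ≤ M)
    (μ ν : Measure ℝ) [IsFiniteMeasure μ] [IsFiniteMeasure ν] :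
    (∫ t in Icc 0 x, cdf0 ν t) - ∫ t in Icc 0 x, cdf0 μ t ≤ wassDist M μ ν := by
  rw [← integral_sub (integrableOn_cdf0 ν 0 x) (integrableOn_cdf0 μ 0 x)]
  calc ∫ t in Icc 0 x, (cdf0 ν t - cdf0 μ t)
      ≤ ∫ t in Icc 0 x, |cdf0 μ t - cdf0 ν t| :=
        setIntegral_mono ((integrableOn_cdf0 ν 0 x).sub (integrableOn_cdf0 μ 0 x))
          ((integrableOn_cdf0 μ 0 x).sub (integrableOn_cdf0 ν 0 x)).abs
          fun t => (le_abs_self _).trans (abs_sub_comm _ _).le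
    _ ≤ wassDist M μ ν := setIntegral_abs_cdf0_sub_le_wassDist (Icc_subset_Icc_right hx) μ ν

lemma mul_cdf0_sub_cdf0_le_wassDist {M x y : ℝ} (hx : 0 ≤ x) (hxy : x ≤ y) (hy : y ≤ M)
    (μ ν : Measure ℝ) [IsFiniteMeasure μ] [IsFiniteMeasure ν] :
    (y - x) * (cdf0 ν x - cdf0 μ y) ≤ wassDist M μ ν := by
  calc (y - x) * (cdf0 ν x - cdf0 μ y)
      = ∫ _ in Icc x y, (cdf0 ν x - cdf0 μ y) := by
        rw [setIntegral_const, Real.volume_real_Icc_of_le hxy, smul_eq_mul]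
    _ ≤ ∫ t in Icc x y, |cdf0 μ t - cdf0 ν t| := by
        refine setIntegral_mono_on (integrableOn_const (by simp))
          ((integrableOn_cdf0 μ x y).sub (integrableOn_cdf0 ν x y)).abs measurableSet_Icc
          fun t ht => ?_
        have hν : cdf0 ν x ≤ cdf0 ν t := cdf0_mono ν ht.1
        have hμ : cdf0 μ t ≤ cdf0 μ y := cdf0_mono μ ht.2
        linarith [neg_abs_le (cdf0 μ t - cdf0 ν t)]
    _ ≤ wassDist M μ ν := setIntegral_abs_cdf0_sub_le_wassDist (Icc_subset_Icc hx hy) μ ν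

lemma setIntegral_sub_eq_integral_cdf0 (μ : Measure ℝ) [IsFiniteMeasure μ] (x : ℝ) :
    ∫ ξ in Icc 0 x, (x - ξ) ∂μ = ∫ t in Icc 0 x, cdf0 μ t := by
  set f : ℝ → ℝ → ℝ := fun ξ t => {p : ℝ × ℝ | p.1 ≤ p.2}.indicator 1 (ξ, t)
  have hf : Integrable (Function.uncurry f) ((μ.restrict (Icc 0 x)).prod
      (volume.restrict (Icc 0 x))) :=
    (integrable_const 1).indicator (measurableSet_le measurable_fst measurable_snd)
  have hinner_t : ∀ ξ ∈ Icc 0 x, ∫ t in Icc 0 x, f ξ t = x - ξ := fun ξ hξ => by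
    have hset : Ici ξ ∩ Icc 0 x = Icc ξ x := by
      ext t
      simp only [mem_inter_iff, mem_Ici, mem_Icc]
      exact ⟨fun h => ⟨h.1, h.2.2⟩, fun h => ⟨h.1, hξ.1.trans h.1, h.2⟩⟩
    change ∫ t in Icc 0 x, (Ici ξ).indicator 1 t = x - ξ
    rw [integral_indicator_one measurableSet_Ici, measureReal_restrict_apply measurableSet_Ici,
      hset, Real.volume_real_Icc_of_le hξ.2]
  have hinner_ξ : ∀ t ∈ Icc 0 x, ∫ ξ in Icc 0 x, f ξ t ∂μ = cdf0 μ t := fun t ht => by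
    have hset : Iic t ∩ Icc 0 x = Icc 0 t := by
      ext ξ
      simp only [mem_inter_iff, mem_Iic, mem_Icc]
      exact ⟨fun h => ⟨h.2.1, h.1⟩, fun h => ⟨h.2, h.1, h.2.trans ht.2⟩⟩
    change ∫ ξ in Icc 0 x, (Iic t).indicator 1 ξ ∂μ = cdf0 μ t
    rw [integral_indicator_one measurableSet_Iic, measureReal_restrict_apply measurableSet_Iic,
      hset]
    rfl
  calc ∫ ξ in Icc 0 x, (x - ξ) ∂μ
      = ∫ ξ in Icc 0 x, (∫ t in Icc 0 x, f ξ t) ∂μ :=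
        setIntegral_congr_fun measurableSet_Icc fun ξ hξ => (hinner_t ξ hξ).symm
    _ = ∫ t in Icc 0 x, ∫ ξ in Icc 0 x, f ξ t ∂μ := integral_integral_swap hf
    _ = ∫ t in Icc 0 x, cdf0 μ t := setIntegral_congr_fun measurableSet_Icc hinner_ξ

lemma ae_nonneg_of_measure_Icc_eq_one {M : ℝ} {μ : Measure ℝ} [IsProbabilityMeasure μ]
    (hμ : μ (Icc 0 M) = 1) : ∀ᵐ ξ ∂μ, 0 ≤ ξ :=
  Filter.mem_of_superset (mem_ae_iff.2 ((prob_compl_eq_zero_iff measurableSet_Icc).2 hμ))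
    fun _ h => h.1

lemma skiCost_eq (b x : ℝ) (μ : Measure ℝ) [IsProbabilityMeasure μ] (hμ : ∀ᵐ ξ ∂μ, 0 ≤ ξ) :
    skiCost b x μ = b + x - b * cdf0 μ x - ∫ t in Icc 0 x, cdf0 μ t := by
  have hcost : ∀ᵐ ξ ∂μ, (if ξ ≤ x then ξ else b + x) =
      b + x - (Icc 0 x).indicator (fun ξ => b + (x - ξ)) ξ := by
    filter_upwards [hμ] with ξ hξ
    by_cases h : ξ ≤ x
    · simp [h, hξ]
    · simp [h]
  have hconst : IntegrableOn (fun _ => b) (Icc 0 x) μ := integrableOn_const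
  have hint : IntegrableOn (fun ξ => x - ξ) (Icc 0 x) μ :=
    (continuous_const.sub continuous_id).integrableOn_Icc
  have hsum : IntegrableOn (fun ξ => b + (x - ξ)) (Icc 0 x) μ := hconst.add hint
  rw [skiCost, integral_congr_ae hcost,
    integral_sub (integrable_const _) (hsum.integrable_indicator measurableSet_Icc),
    integral_indicator measurableSet_Icc, integral_add hconst hint, setIntegral_const,
    setIntegral_sub_eq_integral_cdf0, integral_const, probReal_univ]
  simp only [smul_eq_mul, cdf0, measureReal_def]
  ring

lemma skiCost_nonneg {b x : ℝ} (hb : 0 ≤ b) (hx : 0 ≤ x) {μ : Measure ℝ}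
    (hμ : ∀ᵐ ξ ∂μ, 0 ≤ ξ) : 0 ≤ skiCost b x μ :=
  integral_nonneg_of_ae (hμ.mono fun ξ hξ => by simp only [Pi.zero_apply]; split_ifs <;> linarith)

lemma optSki_le_skiCost {b M x : ℝ} (hb : 0 ≤ b) (hx : x ∈ Icc 0 M) {μ : Measure ℝ}
    (hμ : ∀ᵐ ξ ∂μ, 0 ≤ ξ) : optSki b M μ ≤ skiCost b x μ :=
  ciInf_le ⟨0, by rintro _ ⟨y, rfl⟩; exact skiCost_nonneg hb y.2.1 hμ⟩ (⟨x, hx⟩ : Icc 0 M)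

lemma min_add_mem_Icc {M x δ : ℝ} (hx : x ∈ Icc 0 M) (hδ : 0 ≤ δ) (hM : 0 ≤ M) :
    min (x + δ) M ∈ Icc 0 M :=
  ⟨le_min (by linarith [hx.1]) hM, min_le_right _ _⟩

lemma skiCost_min_add_le {M b x δ : ℝ} (hb : 0 ≤ b) (hx : x ∈ Icc 0 M) (hδ : 0 < δ)
    (μ ν : Measure ℝ) [IsProbabilityMeasure μ] [IsProbabilityMeasure ν]
    (hμ : μ (Icc 0 M) = 1) (hν : ν (Icc 0 M) = 1) :
    skiCost b (min (x + δ) M) μ ≤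
      skiCost b x ν + b * wassDist M μ ν / δ + wassDist M μ ν + δ := by
  set p := min (x + δ) M
  set W := wassDist M μ ν
  have hxp : x ≤ p := le_min (by linarith) hx.2
  have hpδ : p ≤ x + δ := min_le_left _ _
  have hjump : cdf0 ν x - cdf0 μ p ≤ W / δ := by
    rcases le_total (x + δ) M with hxδ | hMxδ
    · have hp : p = x + δ := min_eq_left hxδ
      rw [le_div_iff₀ hδ]
      calc (cdf0 ν x - cdf0 μ p) * δ = (p - x) * (cdf0 ν x - cdf0 μ p) := by rw [hp]; ring
        _ ≤ W := mul_cdf0_sub_cdf0_le_wassDist hx.1 hxp (min_le_right _ _) μ ν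
    · have hFp : cdf0 μ p = 1 := by
        rw [show p = M from min_eq_right hMxδ, cdf0, hμ, ENNReal.toReal_one]
      linarith [cdf0_le_one ν x, div_nonneg (wassDist_nonneg M μ ν) hδ.le]
  have hmass : ∫ t in Icc 0 x, cdf0 μ t ≤ ∫ t in Icc 0 p, cdf0 μ t :=
    setIntegral_mono_set (integrableOn_cdf0 μ 0 p) (ae_of_all _ (cdf0_nonneg μ))
      (Icc_subset_Icc_right hxp).eventuallyLE
  have hW := setIntegral_cdf0_sub_le_wassDist hx.2 μ ν
  have hbjump := mul_le_mul_of_nonneg_left hjump hb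
  rw [skiCost_eq b p μ (ae_nonneg_of_measure_Icc_eq_one hμ),
    skiCost_eq b x ν (ae_nonneg_of_measure_Icc_eq_one hν), mul_div_assoc]
  linarith

lemma optSki_le_optSki_add {M b δ : ℝ} (hM : 0 ≤ M) (hb : 0 ≤ b) (hδ : 0 < δ)
    (μ ν : Measure ℝ) [IsProbabilityMeasure μ] [IsProbabilityMeasure ν]
    (hμ : μ (Icc 0 M) = 1) (hν : ν (Icc 0 M) = 1) :
    optSki b M μ ≤ optSki b M ν + (b * wassDist M μ ν / δ + wassDist M μ ν + δ) := by
  have : Nonempty (Icc 0 M) := ⟨⟨0, left_mem_Icc.2 hM⟩⟩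
  rw [← sub_le_iff_le_add]
  refine le_ciInf fun x => sub_le_iff_le_add.2 ?_
  calc optSki b M μ
      ≤ skiCost b (min (x + δ) M) μ := optSki_le_skiCost hb (min_add_mem_Icc x.2 hδ.le hM)
        (ae_nonneg_of_measure_Icc_eq_one hμ)
    _ ≤ _ := (skiCost_min_add_le hb x.2 hδ μ ν hμ hν).trans_eq (by ring)

lemma le_two_mul_sqrt_of_forall_le_div_add {a c : ℝ} (hc : 0 ≤ c)
    (h : ∀ δ > 0, a ≤ c / δ + δ) : a ≤ 2 * √c := by
  rcases hc.eq_or_lt with rfl | hc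
  · simpa using le_of_forall_pos_le_add fun ε hε => by simpa using h ε hε
  · simpa [Real.div_sqrt, two_mul] using h (√c) (Real.sqrt_pos.2 hc)

/-- Ski rental under Wasserstein heterogeneity: (i) comparison of optimal costs;
(ii) cost of the `δ`-inflated SAA decision. -/
theorem ski_rental_opt_and_inflated
    (M b : ℝ) (hM : 0 < M) (hb : 0 < b)
    (μ ν : Measure ℝ) [IsProbabilityMeasure μ] [IsProbabilityMeasure ν]
    (hμ : μ (Set.Icc 0 M) = 1) (hν : ν (Set.Icc 0 M) = 1) :
    optSki b M μ - optSki b M ν ≤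
      2 * Real.sqrt (b * wassDist M μ ν) + wassDist M μ ν
    ∧
    ∀ δ : ℝ, 0 < δ → ∀ xν ∈ Set.Icc (0:ℝ) M, skiCost b xν ν = optSki b M ν →
      skiCost b (min (xν + δ) M) μ - optSki b M ν ≤
        b * wassDist M μ ν / δ + wassDist M μ ν + δ := by
  refine ⟨?_, fun δ hδ x hx hopt => ?_⟩
  · have := le_two_mul_sqrt_of_forall_le_div_add
      (a := optSki b M μ - optSki b M ν - wassDist M μ ν)
      (mul_nonneg hb.le (wassDist_nonneg M μ ν)) fun δ hδ => by
        linarith [optSki_le_optSki_add hM.le hb.le hδ μ ν hμ hν]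
    linarith
  · linarith [hopt ▸ skiCost_min_add_le hb.le hx hδ μ ν hμ hν]
end
end

section
/- Let b > 0 and C > 0, and let u : [0,C] → ℝ be a nonincreasing function with u(0) = 1 that is integrable on [0,C] and satisfies b·(u(x) − u(C)) ≥ ∫_x^C u(ξ) dξ for every x ∈ [0,C]. Then u(C) ≤ exp(−C/b). -/
/-!
Picard iteration from below: if `u ≥ u C · p((C - ·)/b)` on `[x, C]` for a polynomial `p`, then
the integral inequality gives `u x ≥ u C · (1 + P((C - x)/b))` with `P` the antiderivative of `p`
vanishing at `0`. Starting from `p = 1` (monotonicity) this produces the partial sums of the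
exponential series, so `1 = u 0 ≥ u C · exp (C / b)` in the limit.
-/

open MeasureTheory Set Filter Topology

noncomputable def expPartialSum (n : ℕ) (y : ℝ) : ℝ := ∑ k ∈ Finset.range n, y ^ k / k.factorial

@[fun_prop]
theorem continuous_expPartialSum (n : ℕ) : Continuous (expPartialSum n) := by
  unfold expPartialSum; fun_prop

theorem tendsto_expPartialSum (y : ℝ) :
    Tendsto (fun n => expPartialSum n y) atTop (𝓝 (Real.exp y)) := by
  rw [Real.exp_eq_exp_ℝ]
  exact (NormedSpace.expSeries_div_hasSum_exp y).tendsto_sum_nat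

theorem integral_Icc_pow_div_factorial {b : ℝ} (hb : b ≠ 0) {x C : ℝ} (hx : x ≤ C) (k : ℕ) :
    ∫ t in Icc x C, ((C - t) / b) ^ k / k.factorial
      = b * (((C - x) / b) ^ (k + 1) / (k + 1).factorial) := by
  rw [integral_Icc_eq_integral_Ioc, ← intervalIntegral.integral_of_le hx,
    intervalIntegral.integral_eq_sub_of_hasDerivAt
      (f := fun t => -b * (((C - t) / b) ^ (k + 1) / (k + 1).factorial))]
  · simp
  · intro t _
    refine ((((((hasDerivAt_id t).const_sub C).div_const b).pow (k + 1)).div_const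
      ((k + 1).factorial : ℝ)).const_mul (-b)).congr_deriv ?_
    rw [Nat.factorial_succ]; push_cast; field_simp; simp
  · exact (by fun_prop : Continuous fun t : ℝ => ((C - t) / b) ^ k / k.factorial)
      |>.intervalIntegrable _ _

theorem integral_expPartialSum {b : ℝ} (hb : b ≠ 0) {x C : ℝ} (hx : x ≤ C) (n : ℕ) :
    ∫ t in Icc x C, expPartialSum n ((C - t) / b)
      = b * (expPartialSum (n + 1) ((C - x) / b) - 1) := by
  unfold expPartialSum
  rw [integral_finsetSum _ fun k _ => (by fun_prop : Continuous _).integrableOn_Icc,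
    Finset.sum_range_succ']
  simp [integral_Icc_pow_div_factorial hb hx, Finset.mul_sum]

theorem mul_expPartialSum_le_of_integral_le {a b C : ℝ} (hb : 0 < b) {u : ℝ → ℝ}
    (hu_mono : AntitoneOn u (Icc a C)) (hu_int : IntegrableOn u (Icc a C))
    (hu_ineq : ∀ x ∈ Icc a C, ∫ t in Icc x C, u t ≤ b * (u x - u C)) (n : ℕ) :
    ∀ x ∈ Icc a C, u C * expPartialSum (n + 1) ((C - x) / b) ≤ u x := by
  induction n with
  | zero =>
    intro x hx
    simpa [expPartialSum] using hu_mono hx (right_mem_Icc.2 (hx.1.trans hx.2)) hx.2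
  | succ n ih =>
    intro x hx
    have h_int :
        ∫ t in Icc x C, u C * expPartialSum (n + 1) ((C - t) / b) ≤ ∫ t in Icc x C, u t :=
      setIntegral_mono_on (by fun_prop : Continuous _).integrableOn_Icc
        (hu_int.mono_set (Icc_subset_Icc_left hx.1)) measurableSet_Icc
        fun t ht => ih t ⟨hx.1.trans ht.1, ht.2⟩
    rw [integral_const_mul, integral_expPartialSum hb.ne' hx.2] at h_int
    have h := h_int.trans (hu_ineq x hx)
    rw [mul_left_comm] at h
    linarith [le_of_mul_le_mul_left h hb]

/-- ODE-type tail bound: if `u` is nonincreasing on `[0,C]`, `u(0) = 1`, and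
`b·(u(x) - u(C)) ≥ ∫_x^C u(ξ) dξ` for all `x ∈ [0,C]`, then `u(C) ≤ exp(-C/b)`. -/
theorem ode_tail_bound
    (b C : ℝ) (hb : 0 < b) (hC : 0 < C)
    (u : ℝ → ℝ)
    (hu_mono : AntitoneOn u (Set.Icc 0 C))
    (hu0 : u 0 = 1)
    (hu_int : IntegrableOn u (Set.Icc 0 C))
    (hu_ineq : ∀ x ∈ Set.Icc (0:ℝ) C,
      (∫ t in Set.Icc x C, u t) ≤ b * (u x - u C)) :
    u C ≤ Real.exp (-C / b) := by
  have h_partial (n : ℕ) : u C * expPartialSum (n + 1) (C / b) ≤ 1 := by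
    simpa [hu0] using
      mul_expPartialSum_le_of_integral_le hb hu_mono hu_int hu_ineq n 0 (left_mem_Icc.2 hC.le)
  have h_exp : u C * Real.exp (C / b) ≤ 1 :=
    le_of_tendsto (((tendsto_expPartialSum _).comp (tendsto_add_atTop_nat 1)).const_mul _)
      (Eventually.of_forall h_partial)
  rwa [neg_div, Real.exp_neg, ← one_div, le_div_iff₀ (Real.exp_pos _)]
end
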